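/- The Thue–Morse sequence, defined as the limit of a_0 = 0, a_{n+1} = a_n·(complement of a_n), is cube-free: for every nonempty binary string a, the string aaa does not occur as a factor of the Thue–Morse sequence. -/

import Mathlib

/-- The factor of `ω` starting at `i` of length `n`. -/
def seg {α : Type*} (ω : ℕ → α) (i n : ℕ) : List α :=
  (List.range n).map (fun k => ω (i + k))

/-- `x` occurs in `ω` at position `i`. -/
def OccursAt {α : Type*} (ω : ℕ → α) (x : List α) (i : ℕ) : Prop :=
  seg ω i x.length = x

/-- Strongly almost periodic: every factor occurs in every sufficiently long factor. -/
def SAP {α : Type*} (ω : ℕ → α) : Prop :=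
  ∀ x : List α, (∃ i, OccursAt ω x i) →
    ∃ l, ∀ j, ∃ i, j ≤ i ∧ i + x.length ≤ j + l ∧ OccursAt ω x i

/-- Almost periodic: every factor occurring infinitely often occurs in every
sufficiently long factor. -/
def AP {α : Type*} (ω : ℕ → α) : Prop :=
  ∀ x : List α, {i | OccursAt ω x i}.Infinite →
    ∃ l, ∀ j, ∃ i, j ≤ i ∧ i + x.length ≤ j + l ∧ OccursAt ω x i

/-- Eventually strongly almost periodic: some suffix is strongly almost periodic. -/
def EAP {α : Type*} (ω : ℕ → α) : Prop :=
  ∃ n, SAP (fun i => ω (n + i))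

/-- Prefixes of the Thue--Morse sequence: `a_0 = 0`, `a_{n+1} = a_n · (complement of a_n)`. -/
def tmPrefix : ℕ → List Bool
  | 0 => [false]
  | n + 1 => tmPrefix n ++ (tmPrefix n).map (fun b => !b)

/-- The Thue--Morse sequence, the pointwise limit of the prefixes `tmPrefix n`. -/
def thueMorse (i : ℕ) : Bool := (tmPrefix (i + 1)).getD i false

/-!
Writing `t` for the Thue–Morse sequence, `t (2m) = t m` and `t (2m+1) = !t m`. Suppose `t` has a
factor of length `3n` with period `n`, i.e. `t (i+k) = t (i+k+n)` for `k < 2n`, with `n` least.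
If `n` is even, reading only the positions of one parity gives such a factor of period `n / 2`.
If `n` is odd, comparing a window `t (2j+1) … t (2j+4)` with its shift by `n` forces
`t j = t (j+1) = t (j+2)`, whereas `t (2m) ≠ t (2m+1)` rules out three equal consecutive letters.
-/

theorem OccursAt.getElem?_eq {α : Type*} {ω : ℕ → α} {x : List α} {i : ℕ}
    (h : OccursAt ω x i) {k : ℕ} (hk : k < x.length) : x[k]? = some (ω (i + k)) := by
  rw [← h]
  simp [seg, hk]

theorem OccursAt.apply_add_length_of_cube {α : Type*} {ω : ℕ → α} {a : List α} {i : ℕ}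
    (h : OccursAt ω (a ++ a ++ a) i) {k : ℕ} (hk : k < 2 * a.length) :
    ω (i + k + a.length) = ω (i + k) := by
  have hcube : (a ++ (a ++ a))[k + a.length]? = (a ++ a ++ a)[k]? := by
    rw [List.getElem?_append_right (by omega), Nat.add_sub_cancel,
      List.getElem?_append_left (l₁ := a ++ a) (by simp; omega)]
  rw [← List.append_assoc, h.getElem?_eq (by simp; omega), h.getElem?_eq (by simp; omega)] at hcube
  rw [add_assoc]
  exact Option.some_injective _ hcube

theorem List.getElem?_flatMap_pair_two_mul {α : Type*} (f : α → α) (l : List α) (m : ℕ) :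
    (l.flatMap fun b => [b, f b])[2 * m]? = l[m]? := by
  induction l generalizing m with
  | nil => simp
  | cons b l ih =>
    cases m with
    | zero => rfl
    | succ m => simpa [Nat.mul_succ] using ih m

theorem List.getElem?_flatMap_pair_two_mul_add_one {α : Type*} (f : α → α) (l : List α) (m : ℕ) :
    (l.flatMap fun b => [b, f b])[2 * m + 1]? = l[m]?.map f := by
  induction l generalizing m with
  | nil => simp
  | cons b l ih =>
    cases m with
    | zero => rfl
    | succ m => simpa [Nat.mul_succ] using ih m

theorem length_tmPrefix (n : ℕ) : (tmPrefix n).length = 2 ^ n := by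
  induction n with
  | zero => rfl
  | succ n ih => simp [tmPrefix, ih, pow_succ, mul_two]

theorem tmPrefix_succ_eq_flatMap (n : ℕ) :
    tmPrefix (n + 1) = (tmPrefix n).flatMap fun b => [b, !b] := by
  induction n with
  | zero => rfl
  | succ n ih =>
    calc tmPrefix (n + 2)
        = tmPrefix (n + 1) ++ (tmPrefix (n + 1)).map (!·) := rfl
      _ = (tmPrefix n ++ (tmPrefix n).map (!·)).flatMap fun b => [b, !b] := by
        rw [ih, List.flatMap_append, List.map_flatMap, List.flatMap_map]
        simp

theorem tmPrefix_prefix_of_le {m n : ℕ} (h : m ≤ n) : tmPrefix m <+: tmPrefix n := by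
  induction n, h using Nat.le_induction with
  | base => exact List.prefix_refl _
  | succ n _ ih => exact ih.trans (List.prefix_append _ _)

theorem getElem?_tmPrefix {n i : ℕ} (h : i < 2 ^ n) : (tmPrefix n)[i]? = some (thueMorse i) := by
  have stable : ∀ {m n}, m ≤ n → i < 2 ^ m → (tmPrefix n)[i]? = (tmPrefix m)[i]? :=
    fun hmn hi => by
      obtain ⟨r, hr⟩ := tmPrefix_prefix_of_le hmn
      rw [← hr, List.getElem?_append_left (by rwa [length_tmPrefix])]
  have hi : i < 2 ^ (i + 1) := (Nat.lt_two_pow_self).trans (Nat.pow_lt_pow_succ one_lt_two)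
  have hdef : (tmPrefix (i + 1))[i]? = some (thueMorse i) := by
    rw [thueMorse, List.getD_eq_getElem?_getD, List.getElem?_eq_getElem (by rwa [length_tmPrefix])]
    rfl
  rcases le_total n (i + 1) with hn | hn
  · rw [← stable hn h, hdef]
  · rw [stable hn hi, hdef]

theorem thueMorse_two_mul (m : ℕ) : thueMorse (2 * m) = thueMorse m := by
  have hm : m < 2 ^ m := Nat.lt_two_pow_self
  have h := getElem?_tmPrefix (n := m + 1) (i := 2 * m) (by rw [pow_succ]; omega)
  rw [tmPrefix_succ_eq_flatMap, List.getElem?_flatMap_pair_two_mul, getElem?_tmPrefix hm] at h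
  exact (Option.some_injective _ h).symm

theorem thueMorse_two_mul_add_one (m : ℕ) : thueMorse (2 * m + 1) = !thueMorse m := by
  have hm : m < 2 ^ m := Nat.lt_two_pow_self
  have h := getElem?_tmPrefix (n := m + 1) (i := 2 * m + 1) (by rw [pow_succ]; omega)
  rw [tmPrefix_succ_eq_flatMap, List.getElem?_flatMap_pair_two_mul_add_one,
    getElem?_tmPrefix hm] at h
  exact (Option.some_injective _ h).symm

theorem thueMorse_two_mul_add_eq_iff {a b r : ℕ} (hr : r < 2) :
    thueMorse (2 * a + r) = thueMorse (2 * b + r) ↔ thueMorse a = thueMorse b := by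
  interval_cases r <;> simp [thueMorse_two_mul, thueMorse_two_mul_add_one]

theorem thueMorse_succ_ne_of_eq_succ {j : ℕ} (h : thueMorse j = thueMorse (j + 1)) :
    thueMorse (j + 1) ≠ thueMorse (j + 2) := by
  obtain ⟨q, rfl | rfl⟩ := Nat.even_or_odd' j
  · simp [thueMorse_two_mul, thueMorse_two_mul_add_one] at h
  · rw [show 2 * q + 1 + 1 = 2 * (q + 1) by ring, show 2 * q + 1 + 2 = 2 * (q + 1) + 1 by ring,
      thueMorse_two_mul, thueMorse_two_mul_add_one]
    simp

theorem thueMorse_shift_half {i m : ℕ}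
    (h : ∀ k < 2 * (2 * m), thueMorse (i + k + 2 * m) = thueMorse (i + k)) :
    ∀ k < 2 * m, thueMorse (i / 2 + k + m) = thueMorse (i / 2 + k) := by
  intro k hk
  have hk' := h (2 * k) (by omega)
  rwa [show i + 2 * k + 2 * m = 2 * (i / 2 + k + m) + i % 2 by omega,
    show i + 2 * k = 2 * (i / 2 + k) + i % 2 by omega,
    thueMorse_two_mul_add_eq_iff (Nat.mod_lt _ two_pos)] at hk'

theorem thueMorse_not_shift_of_odd {n : ℕ} (hn : Odd n) (j : ℕ) :
    ¬ ∀ k < 4, thueMorse (2 * j + 1 + k + n) = thueMorse (2 * j + 1 + k) := by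
  obtain ⟨s, rfl⟩ := hn
  intro h
  have e0 : thueMorse (2 * (j + s + 1)) = thueMorse (2 * j + 1) := by
    convert h 0 (by norm_num) using 2; ring
  have e1 : thueMorse (2 * (j + s + 1) + 1) = thueMorse (2 * (j + 1)) := by
    convert h 1 (by norm_num) using 2 <;> ring
  have e2 : thueMorse (2 * (j + s + 2)) = thueMorse (2 * (j + 1) + 1) := by
    convert h 2 (by norm_num) using 2 <;> ring
  have e3 : thueMorse (2 * (j + s + 2) + 1) = thueMorse (2 * (j + 2)) := by
    convert h 3 (by norm_num) using 2 <;> ring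
  simp only [thueMorse_two_mul, thueMorse_two_mul_add_one] at e0 e1 e2 e3
  refine thueMorse_succ_ne_of_eq_succ (j := j) ?_ ?_
  · rw [← e1, e0, Bool.not_not]
  · rw [← e3, e2, Bool.not_not]

theorem thueMorse_not_shift {n : ℕ} (hn : 0 < n) (i : ℕ) :
    ¬ ∀ k < 2 * n, thueMorse (i + k + n) = thueMorse (i + k) := by
  induction n using Nat.strong_induction_on generalizing i with
  | _ n ih =>
  intro h
  obtain ⟨m, rfl | rfl⟩ := Nat.even_or_odd' n
  · exact ih m (by omega) (by omega) (i / 2) (thueMorse_shift_half h)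
  · rcases Nat.eq_zero_or_pos m with rfl | hm
    · exact thueMorse_succ_ne_of_eq_succ (h 0 (by norm_num)).symm (h 1 (by norm_num)).symm
    · -- the odd position `2 * (i / 2) + 1` is `i` or `i + 1`, and `2 * n ≥ 6`
      refine thueMorse_not_shift_of_odd (odd_two_mul_add_one m) (i / 2) fun k hk => ?_
      have := h (2 * (i / 2) + 1 - i + k) (by omega)
      rwa [show i + (2 * (i / 2) + 1 - i + k) = 2 * (i / 2) + 1 + k by omega] at this

/-- The Thue--Morse sequence is cube-free. -/
theorem thueMorse_cubeFree :
    ∀ a : List Bool, a ≠ [] → ¬ ∃ i, OccursAt thueMorse (a ++ a ++ a) i := by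
  rintro a ha ⟨i, hocc⟩
  exact thueMorse_not_shift (List.length_pos_iff.mpr ha) i fun k hk =>
    hocc.apply_add_length_of_cube hk
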